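/- arXiv:1808.05184 — 2 statements merged into one kernel-verified Lean document; each statement's English description precedes it below -/
import Mathlib

section
/- Let A be a finite-dimensional algebra and e an idempotent of A. Then Ext^i_A(A/⟨e⟩, M) = 0 for all A/⟨e⟩-modules M and all 1 ≤ i ≤ d if and only if Ext^i_A(A/⟨e⟩, I) = 0 for all injective A/⟨e⟩-modules I and all 1 ≤ i ≤ d. -/
/-!
Dimension shifting along injective hulls. For a `B`-module `M` take `0 → M → I → M' → 0` with
`I` injective over `B`; it stays exact over `A`. In the long exact sequence of `Ext_A(B, -)`,
`Ext^{n+1}_A(B, M)` sits between `Ext^n_A(B, M')` and `Ext^{n+1}_A(B, I) = 0`, so it vanishes by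
induction on `n` once `n ≥ 1`. For `n = 0` the connecting map vanishes instead, because
`Hom_A(B, I) → Hom_A(B, M')` is onto: as `π` is surjective, an `A`-linear map out of `B` is
determined by the image of `1`, which lifts along `I → M'`.
-/

noncomputable abbrev extGrp (A : Type) [Ring A] (i : ℕ) (X Y : ModuleCat A) : Type :=
  ((Ext ℤ (ModuleCat A) i).obj (Opposite.op X)).obj Y

open CategoryTheory Limits Opposite

namespace ChainComplex

variable {C : Type*} [Category C] [Abelian C]

/-- `P.isoExt` identifies `Ext^n(X, Y)` with `H^n` of `P.linearYonedaObj ℤ Y`, so the homology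
sequence of this functor applied to a short exact sequence is the long exact `Ext` sequence in
the second variable. -/
noncomputable def linearYonedaObjFunctor (P : ChainComplex C ℕ) :
    C ⥤ CochainComplex (ModuleCat ℤ) ℕ where
  obj Y := P.linearYonedaObj ℤ Y
  map f :=
    { f := fun n => ModuleCat.ofHom (Linear.rightComp ℤ (P.X n) f)
      comm' := fun i j _ => by
        ext (g : P.X i ⟶ _)
        exact (Category.assoc _ _ _).symm }
  map_id Y := by
    ext n (g : P.X n ⟶ Y)
    exact Category.comp_id g
  map_comp f g := by
    ext n (u : P.X n ⟶ _)
    exact (Category.assoc _ _ _).symm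

instance (P : ChainComplex C ℕ) : P.linearYonedaObjFunctor.Additive where
  map_add {_ _ f g} := by
    ext n (u : P.X n ⟶ _)
    exact Preadditive.comp_add _ _ _ _ _ _

end ChainComplex

namespace CategoryTheory.ShortComplex.ShortExact

variable {C ι : Type*} [Category C] [Abelian C] {c : ComplexShape ι}
  {S : ShortComplex (HomologicalComplex C c)}

theorem isZero_homology_of_epi_homologyMap (hS : S.ShortExact) {i j : ι} (hij : c.Rel i j)
    [Epi (HomologicalComplex.homologyMap S.g i)] (h₂ : IsZero (S.X₂.homology j)) :
    IsZero (S.X₁.homology j) :=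
  have hδ : hS.δ i j hij = 0 := (hS.homology_exact₃ i j hij).epi_f_iff.1 inferInstance
  have : Mono (HomologicalComplex.homologyMap S.f j) := (hS.homology_exact₁ i j hij).mono_g hδ
  h₂.of_mono (HomologicalComplex.homologyMap S.f j)

end CategoryTheory.ShortComplex.ShortExact

namespace CategoryTheory.ProjectiveResolution

variable {C : Type*} [Category C] [Abelian C] {X : C} (P : ProjectiveResolution X)

theorem shortExact_map_linearYonedaObjFunctor {S : ShortComplex C} (hS : S.ShortExact) :
    (S.map P.complex.linearYonedaObjFunctor).ShortExact := by
  refine HomologicalComplex.shortExact_of_degreewise_shortExact _ fun n => ?_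
  have := hS.mono_f
  refine .mk' ?_ ?_ ?_
  · rw [ShortComplex.moduleCat_exact_iff]
    intro (x : P.complex.X n ⟶ S.X₂) (hx : x ≫ S.g = 0)
    exact ⟨hS.exact.liftFromProjective x hx, hS.exact.liftFromProjective_comp x hx⟩
  · rw [ModuleCat.mono_iff_injective]
    intro (g₁ : P.complex.X n ⟶ S.X₁) (g₂ : P.complex.X n ⟶ S.X₁) h
    exact (cancel_mono S.f).1 h
  · have := hS.epi_g
    rw [ModuleCat.epi_iff_surjective]
    intro (h : P.complex.X n ⟶ S.X₃)
    exact ⟨Projective.factorThru h S.g, Projective.factorThru_comp h S.g⟩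

theorem epi_homologyMap_zero_linearYonedaObjFunctor_map {Y Z : C} (g : Y ⟶ Z)
    (hg : ∀ v : X ⟶ Z, ∃ w : X ⟶ Y, w ≫ g = v) :
    Epi (HomologicalComplex.homologyMap (P.complex.linearYonedaObjFunctor.map g) 0) := by
  set φ := P.complex.linearYonedaObjFunctor.map g
  suffices Epi (HomologicalComplex.cyclesMap φ 0) from
    epi_of_epi_fac (HomologicalComplex.homologyπ_naturality φ 0)
  rw [ModuleCat.epi_iff_surjective]
  intro z
  set u : P.complex.X 0 ⟶ Z := (P.complex.linearYonedaObjFunctor.obj Z).iCycles 0 z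
  have hu : P.complex.d 1 0 ≫ u = 0 :=
    ConcreteCategory.congr_hom ((P.complex.linearYonedaObjFunctor.obj Z).iCycles_d 0 1) z
  -- `u` factors through `X = coker (P.complex.d 1 0)`; lift the factor along `g`.
  obtain ⟨x, hxg, hx⟩ : ∃ x : P.complex.X 0 ⟶ Y, x ≫ g = u ∧ P.complex.d 1 0 ≫ x = 0 := by
    obtain ⟨v, hv⟩ := CokernelCofork.IsColimit.desc' P.isColimitCokernelCofork u hu
    obtain ⟨w, rfl⟩ := hg v
    exact ⟨P.π.f 0 ≫ w, (Category.assoc _ _ _).trans hv,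
      (P.complex_d_comp_π_f_zero_assoc w).trans zero_comp⟩
  refine ⟨(P.complex.linearYonedaObjFunctor.obj Y).cyclesMk x 1 (by simp) hx, ?_⟩
  apply (ModuleCat.mono_iff_injective ((P.complex.linearYonedaObjFunctor.obj Z).iCycles 0)).1
    inferInstance
  rw [← ConcreteCategory.comp_apply, HomologicalComplex.cyclesMap_i, ConcreteCategory.comp_apply]
  exact (congrArg (φ.f 0) (HomologicalComplex.i_cyclesMk
    (P.complex.linearYonedaObjFunctor.obj Y) x 1 (by simp) hx)).trans hxg

end CategoryTheory.ProjectiveResolution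

section Ext

variable {C : Type*} [Category C] [Abelian C] [EnoughProjectives C] {X : C}
  {S : ShortComplex C}

theorem isZero_Ext_succ_of_shortExact_of_epi (P : ProjectiveResolution X) (hS : S.ShortExact)
    (n : ℕ) (hepi : Epi (HomologicalComplex.homologyMap
      (P.complex.linearYonedaObjFunctor.map S.g) n))
    (h₂ : IsZero (((Ext ℤ C (n + 1)).obj (op X)).obj S.X₂)) :
    IsZero (((Ext ℤ C (n + 1)).obj (op X)).obj S.X₁) := by
  have : Epi (HomologicalComplex.homologyMap (S.map P.complex.linearYonedaObjFunctor).g n) :=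
    hepi
  rw [(P.isoExt (n + 1) S.X₁).isZero_iff]
  rw [(P.isoExt (n + 1) S.X₂).isZero_iff] at h₂
  exact (P.shortExact_map_linearYonedaObjFunctor hS).isZero_homology_of_epi_homologyMap
    (i := n) (by simp) h₂

theorem isZero_Ext_one_of_shortExact (hS : S.ShortExact)
    (hlift : ∀ v : X ⟶ S.X₃, ∃ w : X ⟶ S.X₂, w ≫ S.g = v)
    (h₂ : IsZero (((Ext ℤ C 1).obj (op X)).obj S.X₂)) :
    IsZero (((Ext ℤ C 1).obj (op X)).obj S.X₁) :=
  isZero_Ext_succ_of_shortExact_of_epi (projectiveResolution X) hS 0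
    ((projectiveResolution X).epi_homologyMap_zero_linearYonedaObjFunctor_map S.g hlift) h₂

theorem isZero_Ext_succ_succ_of_shortExact (hS : S.ShortExact) (n : ℕ)
    (h₂ : IsZero (((Ext ℤ C (n + 2)).obj (op X)).obj S.X₂))
    (h₃ : IsZero (((Ext ℤ C (n + 1)).obj (op X)).obj S.X₃)) :
    IsZero (((Ext ℤ C (n + 2)).obj (op X)).obj S.X₁) :=
  isZero_Ext_succ_of_shortExact_of_epi (projectiveResolution X) hS (n + 1)
    (((projectiveResolution X).isoExt (n + 1) S.X₃).isZero_iff.1 h₃ |>.epi _) h₂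

end Ext

section RestrictScalars

variable {A B : Type*} [Ring A] [Ring B] (π : A →+* B)

theorem CategoryTheory.ShortComplex.ShortExact.map_restrictScalars
    {S : ShortComplex (ModuleCat B)} (hS : S.ShortExact) :
    (S.map (ModuleCat.restrictScalars π)).ShortExact :=
  .mk' ((moduleCat_exact_iff _).2 ((moduleCat_exact_iff S).1 hS.exact))
    ((ModuleCat.mono_iff_injective _).2 hS.moduleCat_injective_f)
    ((ModuleCat.epi_iff_surjective _).2 hS.moduleCat_surjective_g)

namespace ModuleCat

theorem exists_comp_restrictScalars_map_eq (hπ : Function.Surjective π) {M N : ModuleCat B}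
    (g : M ⟶ N) (hg : Function.Surjective g)
    (v : (restrictScalars π).obj (of B B) ⟶ (restrictScalars π).obj N) :
    ∃ w, w ≫ (restrictScalars π).map g = v := by
  obtain ⟨y, hy⟩ := hg (v (1 : B))
  refine ⟨(restrictScalars π).map (ofHom (LinearMap.toSpanSingleton B M y)), ?_⟩
  ext (x : B)
  obtain ⟨a, rfl⟩ := hπ x
  have hv : v (π a • (1 : B)) = π a • v (1 : B) := v.hom.map_smul a (1 : B)
  show g (π a • y) = v (π a)
  rw [map_smul, hy]
  exact hv.symm.trans (congrArg (fun b : B => v b) (mul_one (π a)))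

end ModuleCat

end RestrictScalars

theorem stmt3_general
    (A : Type) [Ring A] (d : ℕ)
    (B : Type) [Ring B] (π : A →+* B) (hπ : Function.Surjective π) :
    (∀ (M : ModuleCat B) (i : ℕ), 1 ≤ i → i ≤ d →
        Subsingleton (extGrp A i
          ((ModuleCat.restrictScalars π).obj (ModuleCat.of B B))
          ((ModuleCat.restrictScalars π).obj M))) ↔
      (∀ (I : ModuleCat B), Module.Injective B I → ∀ (i : ℕ), 1 ≤ i → i ≤ d →
        Subsingleton (extGrp A i
          ((ModuleCat.restrictScalars π).obj (ModuleCat.of B B))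
          ((ModuleCat.restrictScalars π).obj I))) := by
  refine ⟨fun h I _ => h I, fun h => ?_⟩
  let res := ModuleCat.restrictScalars π
  let X := res.obj (.of B B)
  let S (M : ModuleCat B) : ShortComplex (ModuleCat B) :=
    .mk (Injective.ι M) (cokernel.π _) (cokernel.condition _)
  have hS (M : ModuleCat B) : (S M).ShortExact :=
    ⟨ShortComplex.exact_of_g_is_cokernel _ (cokernelIsCokernel _)⟩
  have hinj (M : ModuleCat B) (i : ℕ) (hi : 1 ≤ i) (hid : i ≤ d) :
      IsZero (((Ext ℤ (ModuleCat A) i).obj (op X)).obj (res.obj (S M).X₂)) :=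
    ModuleCat.isZero_iff_subsingleton.2 <| h _
      ((Module.injective_iff_injective_object _ _).2 (Injective.injective_under M)) i hi hid
  have key (n : ℕ) : ∀ M : ModuleCat B, n + 1 ≤ d →
      IsZero (((Ext ℤ (ModuleCat A) (n + 1)).obj (op X)).obj (res.obj M)) := by
    induction n with
    | zero =>
      intro M hnd
      exact isZero_Ext_one_of_shortExact ((hS M).map_restrictScalars π)
        (ModuleCat.exists_comp_restrictScalars_map_eq π hπ _ (hS M).moduleCat_surjective_g)
        (hinj M 1 le_rfl hnd)
    | succ n ih =>
      intro M hnd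
      exact isZero_Ext_succ_succ_of_shortExact ((hS M).map_restrictScalars π) n
        (hinj M (n + 2) (by omega) hnd) (ih _ (by omega))
  intro M i hi hid
  obtain ⟨n, rfl⟩ := Nat.exists_eq_add_of_le' hi
  exact ModuleCat.isZero_iff_subsingleton.1 (key n M hid)

/-- Let `A` be a finite-dimensional algebra and `e` an idempotent of `A`,
with quotient ring `B = A/⟨e⟩` (presented by a surjective ring homomorphism `π` with
kernel `⟨e⟩`).  Then `Ext^i_A(A/⟨e⟩, M) = 0` for all `A/⟨e⟩`-modules `M` and all
`1 ≤ i ≤ d` if and only if `Ext^i_A(A/⟨e⟩, I) = 0` for all injective `A/⟨e⟩`-modules `I`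
and all `1 ≤ i ≤ d`. -/
theorem stmt3
    (k : Type) [Field k] (A : Type) [Ring A] [Algebra k A] [FiniteDimensional k A]
    (e : A) (he : IsIdempotentElem e) (d : ℕ) (hd : 1 ≤ d)
    (B : Type) [Ring B] (π : A →+* B) (hπ : Function.Surjective π)
    (hker : ∀ a : A, π a = 0 ↔ a ∈ TwoSidedIdeal.span {e}) :
    (∀ (M : ModuleCat B) (i : ℕ), 1 ≤ i → i ≤ d →
        Subsingleton (extGrp A i
          ((ModuleCat.restrictScalars π).obj (ModuleCat.of B B))
          ((ModuleCat.restrictScalars π).obj M))) ↔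
      (∀ (I : ModuleCat B), Module.Injective B I → ∀ (i : ℕ), 1 ≤ i → i ≤ d →
        Subsingleton (extGrp A i
          ((ModuleCat.restrictScalars π).obj (ModuleCat.of B B))
          ((ModuleCat.restrictScalars π).obj I))) :=
  stmt3_general A d B π hπ
end

section
/- Let A be a finite-dimensional algebra over a field k with gl.dim(A) ≤ d, and let M, N be finitely generated A-modules. Then there is an isomorphism Hom_A(M, τ_d(N)) ≅ D Ext^d_A(N, M), where D = Hom_k(−, k) and τ_d = τ ∘ Ω^{d-1} is the d-Auslander–Reiten translation, provided N has no projective direct summands. -/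
/-- `ExactSeq A n S f` says that `0 → S 0 → S 1 → ⋯ → S (n+1) → 0` is an exact
sequence of `A`-modules. -/
def ExactSeq (A : Type) [Ring A] (n : ℕ) (S : Fin (n + 2) → ModuleCat A)
    (f : ∀ i : Fin (n + 1), S i.castSucc ⟶ S i.succ) : Prop :=
  Function.Injective (f 0) ∧ Function.Surjective (f (Fin.last n)) ∧
    ∀ i : Fin n, Function.Exact (f i.castSucc) (f i.succ)

/-- The kernel of `f` is a superfluous (small) submodule of its domain; this expresses
minimality (projective-cover property) of a step in a projective resolution. -/
def SmallKernel (A : Type) [Ring A] (X Y : Type) [AddCommGroup X] [Module A X]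
    [AddCommGroup Y] [Module A Y] (f : X →ₗ[A] Y) : Prop :=
  ∀ L : Submodule A X, L ⊔ LinearMap.ker f = ⊤ → L = ⊤

/-! Since `P_d` and `P_{d-1}` are finitely generated projective, `Hom_A(P, M) ≅ Hom_A(P, A) ⊗_A M`
for both, so the cokernel computing `Ext^d_A(N, M)` is `Tr(Ω^{d-1} N) ⊗_A M`, and the duality is
the tensor–hom adjunction `Hom_A(M, D X) ≅ D(X ⊗_A M)`. Concretely, with a dual basis `(e_i, g_i)`
of `P_d`, a map `u : M → τ` pairs with `h : P_d → M` as `∑ i, β (u (h e_i)) g_i`. The `P_i` are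
finitely generated because the resolution is minimal and `A` is noetherian. -/

open MulOpposite

theorem Module.Finite.of_smallKernel {A X Y : Type} [Ring A] [AddCommGroup X] [Module A X]
    [AddCommGroup Y] [Module A Y] {f : X →ₗ[A] Y} (hf : SmallKernel A X Y f)
    (hr : (LinearMap.range f).FG) : Module.Finite A X := by
  obtain ⟨n, v, hv⟩ := Submodule.fg_iff_exists_fin_generating_family.mp hr
  have hv_mem : ∀ i, v i ∈ LinearMap.range f := fun i => hv ▸ Submodule.subset_span ⟨i, rfl⟩
  choose w hw using hv_mem
  have hmap : (Submodule.span A (Set.range w)).map f = LinearMap.range f := by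
    rw [Submodule.map_span, ← Set.range_comp, ← hv]
    exact congrArg _ (congrArg Set.range (funext hw))
  have htop : Submodule.span A (Set.range w) ⊔ LinearMap.ker f = ⊤ := by
    rw [← Submodule.comap_map_eq, hmap, LinearMap.range_eq_map, Submodule.comap_map_eq, top_sup_eq]
  exact ⟨hf _ htop ▸ Submodule.fg_span (Set.finite_range w)⟩

theorem Module.Finite.of_smallKernel_chain {A : Type} [Ring A] [IsNoetherianRing A] {n : ℕ}
    {S : Fin (n + 2) → ModuleCat A} (f : ∀ i : Fin (n + 1), S i.castSucc ⟶ S i.succ)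
    (hf : ∀ i, SmallKernel A _ _ (f i).hom) (hlast : Module.Finite A (S (Fin.last (n + 1))))
    (i : Fin (n + 2)) : Module.Finite A (S i) :=
  Fin.reverseInduction hlast (fun i _ => of_smallKernel (hf i) (IsNoetherian.noetherian _)) i

theorem Module.Projective.exists_dual_basis (A P : Type*) [Ring A] [AddCommGroup P] [Module A P]
    [Module.Projective A P] [Module.Finite A P] :
    ∃ (n : ℕ) (e : Fin n → P) (g : Fin n → P →ₗ[A] A), ∀ p, ∑ i, g i p • e i = p := by
  classical
  obtain ⟨n, π, hπ⟩ := Module.Finite.exists_fin' A P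
  obtain ⟨s, hs⟩ := Module.projective_lifting_property π LinearMap.id hπ
  refine ⟨n, fun i => π fun j => if i = j then 1 else 0, fun i => LinearMap.proj i ∘ₗ s,
    fun p => ?_⟩
  conv_rhs => rw [← LinearMap.id_apply (R := A) p, ← hs, LinearMap.comp_apply,
    LinearMap.pi_apply_eq_sum_univ]
  rfl

section DualBasis

variable {A P M : Type*} [Ring A] [AddCommGroup P] [Module A P] [AddCommGroup M] [Module A M]
  {n : ℕ} {e : Fin n → P} {g : Fin n → P →ₗ[A] A}

theorem sum_smulRight_eq_of_dual_basis (hdual : ∀ p, ∑ i, g i p • e i = p) (h : P →ₗ[A] M) :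
    ∑ i, (g i).smulRight (h (e i)) = h := by
  ext p
  conv_rhs => rw [← hdual p]
  simp [LinearMap.sum_apply]

theorem sum_op_smul_eq_of_dual_basis (hdual : ∀ p, ∑ i, g i p • e i = p) (γ : P →ₗ[A] A) :
    ∑ i, op (γ (e i)) • g i = γ :=
  sum_smulRight_eq_of_dual_basis hdual γ

end DualBasis

section HomDualPairing

variable {k A : Type*} [CommRing k] [Ring A] [Algebra k A] [SMulCommClass A k A]
  {P Q M T : Type*} [AddCommGroup P] [Module A P] [AddCommGroup Q] [Module A Q]
  [AddCommGroup M] [Module A M] [AddCommGroup T] [Module A T] [Module k T]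
  {n : ℕ} {e : Fin n → P} {g : Fin n → P →ₗ[A] A} {β : T →ₗ[k] (P →ₗ[A] A) →ₗ[k] k}

theorem exists_linearMap_comp_eq_of_injective
    (hβ : ∀ (a : A) (x : T) (γ : P →ₗ[A] A), β (a • x) γ = β x (op a • γ))
    (hβinj : Function.Injective β) (χ : M →+ (P →ₗ[A] A) →ₗ[k] k)
    (hχ : ∀ (a : A) (m : M) (γ : P →ₗ[A] A), χ (a • m) γ = χ m (op a • γ))
    (hχβ : ∀ m, χ m ∈ LinearMap.range β) : ∃ u : M →ₗ[A] T, ∀ m, β (u m) = χ m := by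
  choose v hv using hχβ
  refine ⟨{ toFun := v, map_add' := fun m m' => hβinj ?_, map_smul' := fun a m => hβinj ?_ }, hv⟩
  · simp [hv]
  · ext γ
    simp [hv, hχ, hβ]

variable [Module k M] [IsScalarTower k A M] [SMulCommClass A k M]
  [IsScalarTower k A T] [SMulCommClass A k T]

variable (k M) in
def smulRightₖ (m : M) : (P →ₗ[A] A) →ₗ[k] P →ₗ[A] M where
  toFun γ := γ.smulRight m
  map_add' _ _ := by ext; simp [add_smul]
  map_smul' _ _ := by ext; simp

variable (e g β M) in
def homDualPairing : (M →ₗ[A] T) →ₗ[k] (P →ₗ[A] M) →ₗ[k] k :=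
  LinearMap.mk₂ k (fun u h => ∑ i, β (u (h (e i))) (g i))
    (by simp [Finset.sum_add_distrib]) (by simp [Finset.mul_sum])
    (by simp [Finset.sum_add_distrib]) (by simp [Finset.mul_sum])

theorem homDualPairing_apply (u : M →ₗ[A] T) (h : P →ₗ[A] M) :
    homDualPairing M e g β u h = ∑ i, β (u (h (e i))) (g i) := rfl

theorem homDualPairing_smulRight (hdual : ∀ p, ∑ i, g i p • e i = p)
    (hβ : ∀ (a : A) (x : T) (γ : P →ₗ[A] A), β (a • x) γ = β x (op a • γ))
    (u : M →ₗ[A] T) (m : M) (γ : P →ₗ[A] A) :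
    homDualPairing M e g β u (γ.smulRight m) = β (u m) γ := by
  simp only [homDualPairing_apply, LinearMap.smulRight_apply, map_smul, hβ]
  rw [← map_sum, sum_op_smul_eq_of_dual_basis hdual]

theorem homDualPairing_comp_eq_zero (hdual : ∀ p, ∑ i, g i p • e i = p)
    {n' : ℕ} {e' : Fin n' → Q} {g' : Fin n' → Q →ₗ[A] A} (hdual' : ∀ q, ∑ j, g' j q • e' j = q)
    (hβ : ∀ (a : A) (x : T) (γ : P →ₗ[A] A), β (a • x) γ = β x (op a • γ))
    {φ : P →ₗ[A] Q} (hβφ : ∀ (x : T) (γ : Q →ₗ[A] A), β x (γ ∘ₗ φ) = 0)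
    (u : M →ₗ[A] T) (h : Q →ₗ[A] M) :
    homDualPairing M e g β u (h ∘ₗ φ) = 0 := by
  have hφ : h ∘ₗ φ = ∑ j, (g' j ∘ₗ φ).smulRight (h (e' j)) := by
    ext p
    conv_lhs => rw [LinearMap.comp_apply, ← hdual' (φ p)]
    simp [LinearMap.sum_apply]
  rw [hφ, map_sum]
  exact Finset.sum_eq_zero fun j _ => (homDualPairing_smulRight hdual hβ u _ _).trans (hβφ _ _)

theorem homDualPairing_injective (hdual : ∀ p, ∑ i, g i p • e i = p)
    (hβ : ∀ (a : A) (x : T) (γ : P →ₗ[A] A), β (a • x) γ = β x (op a • γ))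
    (hβinj : Function.Injective β) : Function.Injective (homDualPairing M e g β) := by
  intro u v huv
  ext m
  refine hβinj (LinearMap.ext fun γ => ?_)
  simpa only [homDualPairing_smulRight hdual hβ] using LinearMap.congr_fun huv (γ.smulRight m)

theorem exists_homDualPairing_eq (hdual : ∀ p, ∑ i, g i p • e i = p)
    (hβ : ∀ (a : A) (x : T) (γ : P →ₗ[A] A), β (a • x) γ = β x (op a • γ))
    (hβinj : Function.Injective β) {φ : P →ₗ[A] Q}
    (hβsurj : ∀ χ : (P →ₗ[A] A) →ₗ[k] k, (∀ γ : Q →ₗ[A] A, χ (γ ∘ₗ φ) = 0) → ∃ x, β x = χ)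
    (ψ : (P →ₗ[A] M) →ₗ[k] k) (hψ : ∀ h : Q →ₗ[A] M, ψ (h ∘ₗ φ) = 0) :
    ∃ u, homDualPairing M e g β u = ψ := by
  let χ : M →+ (P →ₗ[A] A) →ₗ[k] k :=
    { toFun m := ψ ∘ₗ smulRightₖ k M m
      map_zero' := by ext; simp [smulRightₖ]
      map_add' m m' := by
        ext γ
        simp only [smulRightₖ, LinearMap.add_apply, LinearMap.comp_apply, LinearMap.coe_mk,
          AddHom.coe_mk, ← map_add]
        congr 1
        ext
        simp [smul_add] }
  have hχ (a : A) (m : M) (γ : P →ₗ[A] A) : χ (a • m) γ = χ m (op a • γ) := by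
    simp only [χ, smulRightₖ, AddMonoidHom.coe_mk, ZeroHom.coe_mk, LinearMap.comp_apply,
      LinearMap.coe_mk, AddHom.coe_mk]
    congr 1
    ext
    simp [mul_smul]
  obtain ⟨u, hu⟩ := exists_linearMap_comp_eq_of_injective hβ hβinj χ hχ
    fun m => hβsurj _ fun γ => hψ (γ.smulRight m)
  refine ⟨u, LinearMap.ext fun h => ?_⟩
  conv_rhs => rw [← sum_smulRight_eq_of_dual_basis hdual h, map_sum]
  simp [homDualPairing_apply, hu, χ, smulRightₖ]

theorem nonempty_linearEquiv_dual_quotient_span_comp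
    [Module.Projective A P] [Module.Finite A P] [Module.Projective A Q] [Module.Finite A Q]
    (φ : P →ₗ[A] Q) (hβφ : ∀ (x : T) (γ : Q →ₗ[A] A), β x (γ ∘ₗ φ) = 0)
    (hβinj : Function.Injective β)
    (hβsurj : ∀ χ : (P →ₗ[A] A) →ₗ[k] k, (∀ γ : Q →ₗ[A] A, χ (γ ∘ₗ φ) = 0) → ∃ x, β x = χ)
    (hβ : ∀ (a : A) (x : T) (γ : P →ₗ[A] A), β (a • x) γ = β x (op a • γ)) :
    Nonempty ((M →ₗ[A] T) ≃ₗ[k]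
      Module.Dual k ((P →ₗ[A] M) ⧸ Submodule.span k (Set.range fun h : Q →ₗ[A] M => h ∘ₗ φ))) := by
  obtain ⟨n, e, g, hdual⟩ := Module.Projective.exists_dual_basis A P
  obtain ⟨n', e', g', hdual'⟩ := Module.Projective.exists_dual_basis A Q
  set V := Submodule.span k (Set.range fun h : Q →ₗ[A] M => h ∘ₗ φ)
  have mem_dualAnnihilator_iff (ψ : Module.Dual k (P →ₗ[A] M)) :
      ψ ∈ V.dualAnnihilator ↔ ∀ h : Q →ₗ[A] M, ψ (h ∘ₗ φ) = 0 := by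
    rw [← SetLike.mem_coe, Submodule.coe_dualAnnihilator_span]
    simp [Set.range_subset_iff]
  let Φ := (homDualPairing M e g β).codRestrict V.dualAnnihilator fun u =>
    (mem_dualAnnihilator_iff _).2 (homDualPairing_comp_eq_zero hdual hdual' hβ hβφ u)
  have hΦ : Function.Bijective Φ := by
    refine ⟨fun u v huv => homDualPairing_injective hdual hβ hβinj (congrArg Subtype.val huv),
      fun ψ => ?_⟩
    obtain ⟨u, hu⟩ := exists_homDualPairing_eq hdual hβ hβinj hβsurj ψ.1
      ((mem_dualAnnihilator_iff _).1 ψ.2)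
    exact ⟨u, Subtype.ext hu⟩
  exact ⟨(LinearEquiv.ofBijective Φ hΦ).trans V.dualQuotEquivDualAnnihilator.symm⟩

end HomDualPairing

/-- The resolution is indexed so that `S 0 = P_d`; `β` identifies `τ` with the `k`-dual of
`Tr(Ω^{d-1} N) = coker(Hom_A(P_{d-1}, A) → Hom_A(P_d, A))`, the `A`-action on `τ` corresponding to
the right `A`-action on `Hom_A(P_d, A)`; and `Ext^d_A(N, M)` is computed from the resolution as
`coker(Hom_A(P_{d-1}, M) → Hom_A(P_d, M))`. -/
theorem stmt10_general
    (k : Type) [Field k] (A : Type) [Ring A] [Algebra k A] [FiniteDimensional k A]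
    [SMulCommClass A k A]
    (d : ℕ) (hd : 0 < d)
    (M : Type) [AddCommGroup M] [Module A M] [Module k M] [IsScalarTower k A M]
    [SMulCommClass A k M]
    (N : Type) [AddCommGroup N] [Module A N] [Module.Finite A N]
    -- a minimal projective resolution `0 → P_d → ⋯ → P_0 → N → 0` (`S 0 = P_d`)
    (S : Fin (d + 2) → ModuleCat A)
    (f : ∀ i : Fin (d + 1), S i.castSucc ⟶ S i.succ)
    (hlast : S (Fin.last (d + 1)) = ModuleCat.of A N)
    (hproj : ∀ i : Fin (d + 1), Module.Projective A (S i.castSucc))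
    (hmin : ∀ i : Fin (d + 1), SmallKernel A _ _ (f i).hom)
    -- `τ = τ_d N = D Tr Ω^{d-1} N`, presented by the pairing `β`
    (τ : Type) [AddCommGroup τ] [Module A τ] [Module k τ] [IsScalarTower k A τ]
    [SMulCommClass A k τ]
    (β : τ →ₗ[k] (((S 0 : Type) →ₗ[A] A) →ₗ[k] k))
    (hβrel : ∀ (x : τ) (h : (S 1 : Type) →ₗ[A] A), β x (h.comp (f 0).hom) = 0)
    (hβinj : Function.Injective β)
    (hβsurj : ∀ φ : ((S 0 : Type) →ₗ[A] A) →ₗ[k] k,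
      (∀ h : (S 1 : Type) →ₗ[A] A, φ (h.comp (f 0).hom) = 0) → ∃ x : τ, β x = φ)
    (hβmod : ∀ (a : A) (x : τ) (g : (S 0 : Type) →ₗ[A] A),
      β (a • x) g = β x (MulOpposite.op a • g)) :
    Nonempty ((M →ₗ[A] τ) ≃ₗ[k]
      Module.Dual k
        (((S 0 : Type) →ₗ[A] M) ⧸
          Submodule.span k
            (Set.range fun h : (S 1 : Type) →ₗ[A] M => h.comp (f 0).hom))) := by
  have : IsNoetherianRing A := isNoetherianRing_iff.mpr (isNoetherian_of_tower k inferInstance)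
  have hfin := Module.Finite.of_smallKernel_chain f hmin (hlast ▸ ‹Module.Finite A N›)
  have : Module.Finite A (S 0) := hfin 0
  have : Module.Finite A (S 1) := hfin 1
  have : Module.Projective A (S 0) := hproj 0
  have : Module.Projective A (S 1) := by
    have hone : (⟨1, by omega⟩ : Fin (d + 1)).castSucc = 1 := Fin.ext (by simp)
    exact hone ▸ hproj _
  let φ : (S 0 : Type) →ₗ[A] (S 1 : Type) := (f 0).hom
  exact nonempty_linearEquiv_dual_quotient_span_comp φ hβrel hβinj hβsurj hβmod

/-- **higher Auslander–Reiten duality of Iyama.** Let `A` be a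
finite-dimensional algebra over a field `k` with `gl.dim(A) ≤ d` and let `M, N` be
finitely generated `A`-modules, with `N` having no nonzero projective direct summands.
Then `Hom_A(M, τ_d N) ≅ D Ext^d_A(N, M)` where `D = Hom_k(−, k)` and
`τ_d = τ ∘ Ω^{d-1}` is the `d`-Auslander–Reiten translation.  Here a minimal projective
resolution `0 → P_d → ⋯ → P_0 → N → 0` is given as `S` (with `S 0 = P_d`), the module
`τ_d N = τ(Ω^{d-1} N) = D Tr(Ω^{d-1} N)` is presented by the perfect pairing `β`
identifying `τ` with the `k`-dual of `Tr(Ω^{d-1}N) = coker(Hom_A(P_{d-1}, A) →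
Hom_A(P_d, A))` (the `A`-action corresponding to the right `A`-action on
`Hom_A(P_d, A)`), and `Ext^d_A(N, M)` is computed from the resolution as
`coker(Hom_A(P_{d-1}, M) → Hom_A(P_d, M))`. -/
theorem stmt10
    (k : Type) [Field k] (A : Type) [Ring A] [Algebra k A] [FiniteDimensional k A]
    [SMulCommClass A k A]
    (d : ℕ) (hd : 0 < d)
    (hgl : ∀ i : ℕ, d < i → ∀ X Y : ModuleCat A, Subsingleton (extGrp A i X Y))
    (M : Type) [AddCommGroup M] [Module A M] [Module k M] [IsScalarTower k A M]
    [SMulCommClass A k M] [Module.Finite A M]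
    (N : Type) [AddCommGroup N] [Module A N] [Module.Finite A N]
    -- `N` has no nonzero projective direct summands
    (hN : ∀ P Q : Submodule A N, IsCompl P Q → Module.Projective A P → P = ⊥)
    -- a minimal projective resolution `0 → P_d → ⋯ → P_0 → N → 0` (`S 0 = P_d`)
    (S : Fin (d + 2) → ModuleCat A)
    (f : ∀ i : Fin (d + 1), S i.castSucc ⟶ S i.succ)
    (hlast : S (Fin.last (d + 1)) = ModuleCat.of A N)
    (hproj : ∀ i : Fin (d + 1), Module.Projective A (S i.castSucc))
    (hex : ExactSeq A d S f)
    (hmin : ∀ i : Fin (d + 1), SmallKernel A _ _ (f i).hom)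
    -- `τ = τ_d N = D Tr Ω^{d-1} N`, presented by the pairing `β`
    (τ : Type) [AddCommGroup τ] [Module A τ] [Module k τ] [IsScalarTower k A τ]
    [SMulCommClass A k τ]
    (β : τ →ₗ[k] (((S 0 : Type) →ₗ[A] A) →ₗ[k] k))
    (hβrel : ∀ (x : τ) (h : (S 1 : Type) →ₗ[A] A), β x (h.comp (f 0).hom) = 0)
    (hβinj : Function.Injective β)
    (hβsurj : ∀ φ : ((S 0 : Type) →ₗ[A] A) →ₗ[k] k,
      (∀ h : (S 1 : Type) →ₗ[A] A, φ (h.comp (f 0).hom) = 0) → ∃ x : τ, β x = φ)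
    (hβmod : ∀ (a : A) (x : τ) (g : (S 0 : Type) →ₗ[A] A),
      β (a • x) g = β x (MulOpposite.op a • g)) :
    Nonempty ((M →ₗ[A] τ) ≃ₗ[k]
      Module.Dual k
        (((S 0 : Type) →ₗ[A] M) ⧸
          Submodule.span k
            (Set.range fun h : (S 1 : Type) →ₗ[A] M => h.comp (f 0).hom))) :=
  stmt10_general k A d hd M N S f hlast hproj hmin τ β hβrel hβinj hβsurj hβmod
end
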